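/- Let f₁, f₂ > 0 with f₁ ≠ f₂, s > 0, t₁, α, β real with β ≠ α f₁ t₁. Then there exists ε > 0 such that for every δ with |δ| < ε there exist unique τ and p ≥ 0 with p > 0 satisfying α δ + τ + p = s and β δ + f₁ t₁ τ + (1/2) f₁ τ² + f₁(t₁ + τ) p + (1/2) f₂ p² = f₁ t₁ s + (1/2) f₂ s², and (τ, p) depends continuously on δ with (τ, p) = (0, s) at δ = 0. -/

import Mathlib

/-!
Eliminating `τ = s - α δ - p` turns the energy equation into `(f₂ - f₁) p² = (f₂ - f₁) R(δ)`
for an explicit quadratic polynomial `R` with `R 0 = s²`. Since `f₁ ≠ f₂` this is `p² = R(δ)`,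
whose unique positive solution `p = √R(δ)` exists as long as `R(δ) > 0`, which by continuity
holds on a neighbourhood of `δ = 0`.
-/

open Filter Topology Set

theorem exists_forall_mem_Ioo_of_eventually {p : ℝ → Prop} (h : ∀ᶠ x in 𝓝 0, p x) :
    ∃ ε > 0, ∀ x ∈ Ioo (-ε) ε, p x := by
  obtain ⟨ε, hε, hp⟩ := Metric.eventually_nhds_iff.mp h
  refine ⟨ε, hε, fun x hx => hp ?_⟩
  rw [Real.dist_0_eq_abs, abs_lt]
  exact hx

section MechanicalLens

variable (α β s t₁ f₁ f₂ : ℝ)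

/-- The square of the second-phase duration `p(δ)`. -/
noncomputable def lensRadicand (δ : ℝ) : ℝ :=
  s ^ 2 - (2 * δ * (β - α * f₁ * t₁) + f₁ * (α ^ 2 * δ ^ 2 - 2 * α * δ * s)) / (f₂ - f₁)

theorem continuous_lensRadicand : Continuous (lensRadicand α β s t₁ f₁ f₂) := by
  unfold lensRadicand
  fun_prop

theorem lensRadicand_zero : lensRadicand α β s t₁ f₁ f₂ 0 = s ^ 2 := by
  simp [lensRadicand]

variable {α β s t₁ f₁ f₂}

theorem lens_energy_iff_sq_eq_lensRadicand (hne : f₁ ≠ f₂) {δ τ p : ℝ}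
    (hsum : α * δ + τ + p = s) :
    β * δ + f₁ * t₁ * τ + (1/2) * f₁ * τ^2 + f₁ * (t₁ + τ) * p + (1/2) * f₂ * p^2
        = f₁ * t₁ * s + (1/2) * f₂ * s^2 ↔
      p ^ 2 = lensRadicand α β s t₁ f₁ f₂ δ := by
  have hc : f₂ - f₁ ≠ 0 := sub_ne_zero.mpr hne.symm
  obtain rfl : τ = s - α * δ - p := by linarith
  have hcR : (f₂ - f₁) * lensRadicand α β s t₁ f₁ f₂ δ = (f₂ - f₁) * s ^ 2 -
      (2 * δ * (β - α * f₁ * t₁) + f₁ * (α ^ 2 * δ ^ 2 - 2 * α * δ * s)) := by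
    rw [lensRadicand, mul_sub, mul_div_cancel₀ _ hc]
  calc _ ↔ (f₂ - f₁) * p ^ 2 = (f₂ - f₁) * lensRadicand α β s t₁ f₁ f₂ δ := by
        rw [hcR]
        constructor
        · intro h; linear_combination 2 * h
        · intro h; linear_combination (1/2) * h
    _ ↔ _ := mul_right_inj' hc

end MechanicalLens

theorem mechanical_lens_main_general
    (α β s t₁ f₁ f₂ : ℝ) (hne : f₁ ≠ f₂)
    (hs : 0 < s) :
    ∃ ε > 0, ∃ T P : ℝ → ℝ,
      ContinuousOn T (Set.Ioo (-ε) ε) ∧ ContinuousOn P (Set.Ioo (-ε) ε) ∧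
      T 0 = 0 ∧ P 0 = s ∧
      ∀ δ ∈ Set.Ioo (-ε) ε,
        (0 < P δ ∧
         α * δ + T δ + P δ = s ∧
         β * δ + f₁ * t₁ * T δ + (1/2) * f₁ * (T δ)^2
           + f₁ * (t₁ + T δ) * P δ + (1/2) * f₂ * (P δ)^2
           = f₁ * t₁ * s + (1/2) * f₂ * s^2) ∧
        ∀ τ p : ℝ, 0 < p →
          α * δ + τ + p = s →
          β * δ + f₁ * t₁ * τ + (1/2) * f₁ * τ^2
            + f₁ * (t₁ + τ) * p + (1/2) * f₂ * p^2
            = f₁ * t₁ * s + (1/2) * f₂ * s^2 →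
          τ = T δ ∧ p = P δ := by
  set R := lensRadicand α β s t₁ f₁ f₂
  have hR : Continuous R := continuous_lensRadicand α β s t₁ f₁ f₂
  have hR0 : R 0 = s ^ 2 := lensRadicand_zero α β s t₁ f₁ f₂
  have hP0 : √(R 0) = s := by rw [hR0, Real.sqrt_sq hs.le]
  obtain ⟨ε, hε, hRpos⟩ : ∃ ε > 0, ∀ δ ∈ Ioo (-ε) ε, 0 < R δ :=
    exists_forall_mem_Ioo_of_eventually <|
      continuousAt_const.eventually_lt hR.continuousAt (by rw [hR0]; positivity)
  refine ⟨ε, hε, fun δ => s - α * δ - √(R δ), fun δ => √(R δ), by fun_prop, by fun_prop,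
    by simp [hP0], hP0, fun δ hδ => ⟨⟨Real.sqrt_pos.mpr (hRpos δ hδ), by ring, ?_⟩, ?_⟩⟩
  · rw [lens_energy_iff_sq_eq_lensRadicand (α := α) hne (by ring), Real.sq_sqrt (hRpos δ hδ).le]
  · intro τ p hp hsum henergy
    have hpR : p ^ 2 = R δ := (lens_energy_iff_sq_eq_lensRadicand hne hsum).mp henergy
    have hp_eq : p = √(R δ) := by rw [← hpR, Real.sqrt_sq hp.le]
    exact ⟨by linarith, hp_eq⟩

/-- Main theorem of the mechanical lens: for all sufficiently small offsets δ
there is a unique pair (τ, p) with p > 0 solving the system, depending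
continuously on δ, with (τ, p) = (0, s) at δ = 0. -/
theorem mechanical_lens_main
    (α β s t₁ f₁ f₂ : ℝ) (hf₁ : 0 < f₁) (hf₂ : 0 < f₂) (hne : f₁ ≠ f₂)
    (hs : 0 < s) (htrans : β ≠ α * f₁ * t₁) :
    ∃ ε > 0, ∃ T P : ℝ → ℝ,
      ContinuousOn T (Set.Ioo (-ε) ε) ∧ ContinuousOn P (Set.Ioo (-ε) ε) ∧
      T 0 = 0 ∧ P 0 = s ∧
      ∀ δ ∈ Set.Ioo (-ε) ε,
        (0 < P δ ∧
         α * δ + T δ + P δ = s ∧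
         β * δ + f₁ * t₁ * T δ + (1/2) * f₁ * (T δ)^2
           + f₁ * (t₁ + T δ) * P δ + (1/2) * f₂ * (P δ)^2
           = f₁ * t₁ * s + (1/2) * f₂ * s^2) ∧
        ∀ τ p : ℝ, 0 < p →
          α * δ + τ + p = s →
          β * δ + f₁ * t₁ * τ + (1/2) * f₁ * τ^2
            + f₁ * (t₁ + τ) * p + (1/2) * f₂ * p^2
            = f₁ * t₁ * s + (1/2) * f₂ * s^2 →
          τ = T δ ∧ p = P δ :=
  mechanical_lens_main_general α β s t₁ f₁ f₂ hne hs
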